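/- Let V be the bigraded vector space with weight-1 generators concentrated in degrees [0,2], exactly one-dimensional in degree 0 spanned by p, and weight-2 generators concentrated in degrees [1,3], with the degree-1 weight-2 part one-dimensional spanned by an odd-degree generator u (so u² = 0 in Sym(V)). Then every nonzero monomial x ∈ Sym(V) with wt(x) > |x| + 1 is divisible by p. (This is the divisibility lemma for orientable surfaces.) -/
import Mathlib


/-- divisibility lemma for orientable surfaces.  Let `V` be a bigraded
vector space with a bihomogeneous basis `B`: the weight-1 generators have homological
degrees in `[0, 2]`, with the degree-0 part one-dimensional, spanned by `p`; the weight-2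
generators have degrees in `[1, 3]`, with the degree-1 part one-dimensional, spanned by
the odd-degree generator `u` (so `u² = 0` in `Sym(V)`).  Then every nonzero monomial
`x ∈ Sym(V)` with `wt x > |x| + 1` is divisible by `p`.  A monomial is encoded by its
exponent vector `m : B →₀ ℕ`; it is nonzero precisely when every odd-degree generator
occurs with exponent at most `1`. -/
theorem stmt10 (B : Type) (wt deg : B → ℕ) (p u : B)
    (hwt : ∀ b, wt b = 1 ∨ wt b = 2)
    (hp1 : wt p = 1) (hp0 : deg p = 0)
    (hw1 : ∀ b, wt b = 1 → deg b ≤ 2)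
    (hp : ∀ b, wt b = 1 → deg b = 0 → b = p)
    (hw2 : ∀ b, wt b = 2 → 1 ≤ deg b ∧ deg b ≤ 3)
    (hu2 : wt u = 2) (hu1 : deg u = 1)
    (hu : ∀ b, wt b = 2 → deg b = 1 → b = u)
    (m : B →₀ ℕ)
    (hnz : ∀ b, Odd (deg b) → m b ≤ 1)
    (hgt : (m.sum fun b e => deg b * e) + 1 < m.sum fun b e => wt b * e) :
    1 ≤ m p := by
  classical
  by_contra h
  push_neg at h
  have hmp : m p = 0 := Nat.lt_one_iff.mp h
  have key : ∀ b ∈ m.support, wt b * m b ≤ deg b * m b + (if b = u then m b else 0) := by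
    intro b hb
    by_cases hbu : b = u
    · subst hbu; simp [hu2, hu1]; omega
    · simp only [hbu, if_false, add_zero]
      rcases hwt b with h1 | h2
      · have hd : deg b ≠ 0 := by
          intro h0
          exact Finsupp.mem_support_iff.mp hb (hp b h1 h0 ▸ hmp)
        have : 1 ≤ deg b := Nat.one_le_iff_ne_zero.mpr hd
        calc wt b * m b = m b := by rw [h1, one_mul]
          _ ≤ deg b * m b := Nat.le_mul_of_pos_left _ this
      · have : deg b ≠ 1 := fun h1d => hbu (hu b h2 h1d)
        have h2d : 2 ≤ deg b := by have := (hw2 b h2).1; omega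
        calc wt b * m b = 2 * m b := by rw [h2]
          _ ≤ deg b * m b := Nat.mul_le_mul_right _ h2d
  have hsum : (m.sum fun b e => wt b * e) ≤ (m.sum fun b e => deg b * e) + m u := by
    rw [Finsupp.sum, Finsupp.sum]
    calc ∑ b ∈ m.support, wt b * m b
        ≤ ∑ b ∈ m.support, (deg b * m b + if b = u then m b else 0) :=
          Finset.sum_le_sum key
      _ = (∑ b ∈ m.support, deg b * m b) + ∑ b ∈ m.support, (if b = u then m b else 0) :=
          Finset.sum_add_distrib
      _ ≤ (∑ b ∈ m.support, deg b * m b) + m u := by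
          gcongr
          calc (∑ b ∈ m.support, if b = u then m b else 0)
              = if u ∈ m.support then m u else 0 := Finset.sum_ite_eq' _ _ _
            _ ≤ m u := by split <;> simp
  have hmu : m u ≤ 1 := hnz u (by rw [hu1]; exact odd_one)
  omega
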